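/- Let R be a commutative ring and I an ideal of R. Let a₁,…,a₆, b₁,…,b₆ ∈ R with a₄, a₅, a₆ ∈ I and b₁, b₂, b₃ ∈ I. For 0 ≤ i ≤ 6 let c_i = Σ_{Λ ⊆ {1,…,6}, #Λ = i} (Π_{j∈Λ} a_j)·(Π_{j∉Λ} b_j); equivalently c_i is the coefficient of e₁^i e₂^{6−i} in the product Π_{j=1}^{6}(a_j e₁ + b_j e₂) in the polynomial ring R[e₁, e₂]. Then c_i ∈ I^{|3−i|}. -/
import Mathlib

lemma prod_mem_pow_card' {R : Type*} [CommRing R] (I : Ideal R) {ι : Type*}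
    (S : Finset ι) (f : ι → R) (h : ∀ j ∈ S, f j ∈ I) :
    (∏ j ∈ S, f j) ∈ I ^ S.card := by
  induction S using Finset.cons_induction with
  | empty => simp
  | cons x S hx ih =>
    rw [Finset.prod_cons, Finset.card_cons, pow_succ, mul_comm (I ^ S.card) I]
    exact Ideal.mul_mem_mul (h x (Finset.mem_cons_self x S))
      (ih fun j hj => h j (Finset.mem_cons_of_mem hj))

/-- Let `R` be a commutative ring, `I` an ideal, and
`a₁,…,a₆,b₁,…,b₆ ∈ R` with `a₄,a₅,a₆ ∈ I` and `b₁,b₂,b₃ ∈ I` (here indexed by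
`Fin 6`, so `a j ∈ I` for `j ≥ 3` and `b j ∈ I` for `j < 3`).  For `0 ≤ i ≤ 6` the
coefficient `c i = Σ_{Λ ⊆ {1,…,6}, #Λ = i} (Π_{j∈Λ} a j)·(Π_{j∉Λ} b j)` of
`e₁^i e₂^(6-i)` in `Π_j (a_j e₁ + b_j e₂)` lies in `I^{|3-i|}`. -/
theorem coeff_in_ideal_power {R : Type*} [CommRing R] (I : Ideal R)
    (a b : Fin 6 → R)
    (ha : ∀ j : Fin 6, 3 ≤ (j : ℕ) → a j ∈ I)
    (hb : ∀ j : Fin 6, (j : ℕ) < 3 → b j ∈ I)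
    (i : ℕ) (hi : i ≤ 6) :
    (∑ Λ ∈ Finset.powersetCard i (Finset.univ : Finset (Fin 6)),
        (∏ j ∈ Λ, a j) * ∏ j ∈ Λᶜ, b j) ∈ I ^ (((3 : ℤ) - (i : ℤ)).natAbs) := by
  apply Ideal.sum_mem
  intro Λ hΛ
  have hcard : Λ.card = i := (Finset.mem_powersetCard.mp hΛ).2
  set p : Fin 6 → Prop := fun j => (j : ℕ) < 3 with hp
  set k := (Λ.filter fun j => ¬ p j).card with hk
  set t := (Λ.filter p).card with ht
  set m := (Λᶜ.filter p).card with hm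
  -- k + t = i
  have h1 : t + k = i := by
    rw [ht, hk, Finset.card_filter_add_card_filter_not, hcard]
  -- t + m = 3
  have h2 : t + m = 3 := by
    have hdisj : Disjoint (Λ.filter p) (Λᶜ.filter p) :=
      Finset.disjoint_filter_filter disjoint_compl_right
    have hunion : Λ.filter p ∪ Λᶜ.filter p = Finset.univ.filter p := by
      rw [← Finset.filter_union, Finset.union_compl]
    have := Finset.card_union_of_disjoint hdisj
    rw [hunion] at this
    have h3 : (Finset.univ.filter p).card = 3 := by decide
    omega
  -- the term lies in I ^ (k + m)
  have hterm : (∏ j ∈ Λ, a j) * ∏ j ∈ Λᶜ, b j ∈ I ^ (k + m) := by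
    have ea : ∏ j ∈ Λ, a j
        = (∏ j ∈ Λ.filter p, a j) * ∏ j ∈ Λ.filter (fun j => ¬ p j), a j :=
      (Finset.prod_filter_mul_prod_filter_not Λ p a).symm
    have eb : ∏ j ∈ Λᶜ, b j
        = (∏ j ∈ Λᶜ.filter p, b j) * ∏ j ∈ Λᶜ.filter (fun j => ¬ p j), b j :=
      (Finset.prod_filter_mul_prod_filter_not Λᶜ p b).symm
    have hka : (∏ j ∈ Λ.filter (fun j => ¬ p j), a j) ∈ I ^ k := by
      apply prod_mem_pow_card'
      intro j hj
      exact ha j (by have := (Finset.mem_filter.mp hj).2; simp [hp] at this; omega)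
    have hmb : (∏ j ∈ Λᶜ.filter p, b j) ∈ I ^ m := by
      apply prod_mem_pow_card'
      intro j hj
      exact hb j (Finset.mem_filter.mp hj).2
    have heq : (∏ j ∈ Λ, a j) * ∏ j ∈ Λᶜ, b j
        = ((∏ j ∈ Λ.filter p, a j) * ∏ j ∈ Λᶜ.filter (fun j => ¬ p j), b j) *
          ((∏ j ∈ Λ.filter (fun j => ¬ p j), a j) * ∏ j ∈ Λᶜ.filter p, b j) := by
      rw [ea, eb]; ring
    rw [heq, pow_add]
    exact Ideal.mul_mem_left _ _ (Ideal.mul_mem_mul hka hmb)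
  have hle : ((3 : ℤ) - (i : ℤ)).natAbs ≤ k + m := by omega
  exact Ideal.pow_le_pow_right hle hterm
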